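/- arXiv:2505.01370 — 2 statements merged into one kernel-verified Lean document; each statement's English description precedes it below -/
import Mathlib

section
/- Let A be a b×a matrix and B a c×b matrix over F₂ = ZMod 2 with B * A = 0. Given vectors z₁, …, z_k ∈ F₂^b with B.mulVec z_j = 0 whose classes form a basis of H₁ := ker(B.mulVecLin)/range(A.mulVecLin), there exist vectors x₁, …, x_k ∈ F₂^b with Aᵀ.mulVec x_i = 0 whose classes form a basis of H¹ := ker(Aᵀ.mulVecLin)/range(Bᵀ.mulVecLin) and such that x_i ⬝ᵥ z_j = δ_{ij} for all i, j; moreover the classes of x₁, …, x_k in H¹ satisfying this duality condition are unique. -/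
open Matrix

abbrev F2 := ZMod 2

/-- Degree-1 homology `ker(B.mulVecLin) / range(A.mulVecLin)`. -/
abbrev MatHomology {a b c : ℕ} (A : Matrix (Fin b) (Fin a) F2)
    (B : Matrix (Fin c) (Fin b) F2) :=
  (LinearMap.ker B.mulVecLin) ⧸
    (Submodule.comap (LinearMap.ker B.mulVecLin).subtype (LinearMap.range A.mulVecLin))

/-- Degree-1 cohomology `ker(Aᵀ.mulVecLin) / range(Bᵀ.mulVecLin)`. -/
abbrev MatCohomology {a b c : ℕ} (A : Matrix (Fin b) (Fin a) F2)
    (B : Matrix (Fin c) (Fin b) F2) :=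
  (LinearMap.ker Aᵀ.mulVecLin) ⧸
    (Submodule.comap (LinearMap.ker Aᵀ.mulVecLin).subtype (LinearMap.range Bᵀ.mulVecLin))

/-- The homology class of a `Z`-cycle `z` (a vector with `B.mulVec z = 0`). -/
def MatHomology.mk {a b c : ℕ} (A : Matrix (Fin b) (Fin a) F2)
    (B : Matrix (Fin c) (Fin b) F2) (z : Fin b → F2) (hz : B.mulVec z = 0) :
    MatHomology A B :=
  Submodule.Quotient.mk ⟨z, by rwa [LinearMap.mem_ker, Matrix.mulVecLin_apply]⟩

/-- The cohomology class of an `X`-cocycle `x` (a vector with `Aᵀ.mulVec x = 0`). -/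
def MatCohomology.mk {a b c : ℕ} (A : Matrix (Fin b) (Fin a) F2)
    (B : Matrix (Fin c) (Fin b) F2) (x : Fin b → F2) (hx : Aᵀ.mulVec x = 0) :
    MatCohomology A B :=
  Submodule.Quotient.mk ⟨x, by rwa [LinearMap.mem_ker, Matrix.mulVecLin_apply]⟩

/-! The dot product descends to a pairing `H¹ × H₁ → F₂`, because `ker Aᵀ ⟂ range A` and
`range Bᵀ ⟂ ker B`. It is nondegenerate on the `H¹` side since the annihilator of `ker B` is the
row space of `B`, and `dim H¹ = b - rk A - rk B = dim H₁` by rank–nullity and `rk Aᵀ = rk A`;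
so the pairing identifies `H¹` with the dual of `H₁`. The `x_i` are representatives of the basis
dual to the classes of the `z_j`, and uniqueness is injectivity of the pairing. -/

open Module

theorem Matrix.mem_range_mulVecLin_transpose_of_forall_dotProduct_eq_zero
    {K m n : Type*} [Field K] [Fintype m] [Fintype n] (B : Matrix m n K) {x : n → K}
    (hx : ∀ z, B *ᵥ z = 0 → x ⬝ᵥ z = 0) :
    x ∈ LinearMap.range Bᵀ.mulVecLin := by
  classical
  have hann : dotProductEquiv K n x ∈ (LinearMap.ker B.mulVecLin).dualAnnihilator :=
    (Submodule.mem_dualAnnihilator _).2 fun z hz => hx z hz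
  rw [← LinearMap.range_dualMap_eq_dualAnnihilator_ker] at hann
  obtain ⟨φ, hφ⟩ := hann
  set w := (dotProductEquiv K m).symm φ
  refine ⟨w, (dotProductEquiv K n).injective (LinearMap.ext fun z => ?_)⟩
  calc (Bᵀ *ᵥ w) ⬝ᵥ z = w ⬝ᵥ B *ᵥ z := by rw [Matrix.mulVec_transpose, Matrix.dotProduct_mulVec]
    _ = φ (B *ᵥ z) := LinearMap.congr_fun ((dotProductEquiv K m).apply_symm_apply φ) _
    _ = x ⬝ᵥ z := LinearMap.congr_fun hφ z

theorem Matrix.range_mulVecLin_le_ker_mulVecLin {R l m n : Type*} [CommSemiring R] [Fintype l]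
    [Fintype n] {A : Matrix n l R} {B : Matrix m n R} (hBA : B * A = 0) :
    LinearMap.range A.mulVecLin ≤ LinearMap.ker B.mulVecLin :=
  LinearMap.range_le_ker_iff.2 <| by rw [← Matrix.mulVecLin_mul, hBA, Matrix.mulVecLin_zero]

theorem finrank_quotient_comap_range_add_finrank_range_add_finrank_range
    {K U V W : Type*} [DivisionRing K] [AddCommGroup U] [AddCommGroup V] [AddCommGroup W]
    [Module K U] [Module K V] [Module K W] [FiniteDimensional K V]
    (g : U →ₗ[K] V) (f : V →ₗ[K] W) (hfg : LinearMap.range g ≤ LinearMap.ker f) :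
    finrank K (LinearMap.ker f ⧸ (LinearMap.range g).comap (LinearMap.ker f).subtype)
      + finrank K (LinearMap.range g) + finrank K (LinearMap.range f) = finrank K V := by
  rw [← (Submodule.comapSubtypeEquivOfLe hfg).finrank_eq, Submodule.finrank_quotient_add_finrank,
    add_comm, LinearMap.finrank_range_add_finrank_ker]

section ChainComplex

variable {a b c : ℕ} (A : Matrix (Fin b) (Fin a) F2) (B : Matrix (Fin c) (Fin b) F2)

theorem MatCohomology.exists_mk_eq (q : MatCohomology A B) :
    ∃ x hx, MatCohomology.mk A B x hx = q := by
  obtain ⟨⟨x, hx⟩, rfl⟩ := Submodule.Quotient.mk_surjective _ q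
  exact ⟨x, by rwa [LinearMap.mem_ker, Matrix.mulVecLin_apply] at hx, rfl⟩

noncomputable def cohomologyPairing : MatCohomology A B →ₗ[F2] Dual F2 (MatHomology A B) :=
  LinearMap.liftQ₂ _ _
    ((dotProductBilin F2 F2).compl₁₂ (LinearMap.ker Aᵀ.mulVecLin).subtype
      (LinearMap.ker B.mulVecLin).subtype)
    (by
      rintro ⟨_, -⟩ ⟨w, rfl⟩
      refine LinearMap.ext fun ⟨z, hz⟩ => ?_
      rw [LinearMap.mem_ker, Matrix.mulVecLin_apply] at hz
      change (Bᵀ *ᵥ w) ⬝ᵥ z = 0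
      rw [Matrix.mulVec_transpose, ← Matrix.dotProduct_mulVec, hz, dotProduct_zero])
    (by
      rintro ⟨_, -⟩ ⟨y, rfl⟩
      refine LinearMap.ext fun ⟨x, hx⟩ => ?_
      rw [LinearMap.mem_ker, Matrix.mulVecLin_apply] at hx
      change x ⬝ᵥ A *ᵥ y = 0
      rw [Matrix.dotProduct_mulVec, ← Matrix.mulVec_transpose, hx, zero_dotProduct])

@[simp]
theorem cohomologyPairing_mk_mk (x : Fin b → F2) (hx : Aᵀ *ᵥ x = 0) (z : Fin b → F2)
    (hz : B *ᵥ z = 0) :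
    cohomologyPairing A B (MatCohomology.mk A B x hx) (MatHomology.mk A B z hz) = x ⬝ᵥ z :=
  rfl

theorem cohomologyPairing_injective : Function.Injective (cohomologyPairing A B) := by
  refine (injective_iff_map_eq_zero _).2 fun q hq => ?_
  obtain ⟨x, hx, rfl⟩ := MatCohomology.exists_mk_eq A B q
  have horth : ∀ z, B *ᵥ z = 0 → x ⬝ᵥ z = 0 := fun z hz =>
    LinearMap.congr_fun hq (MatHomology.mk A B z hz)
  exact (Submodule.Quotient.mk_eq_zero _).2
    (B.mem_range_mulVecLin_transpose_of_forall_dotProduct_eq_zero horth)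

theorem finrank_matHomology_add_rank_add_rank (hBA : B * A = 0) :
    finrank F2 (MatHomology A B) + A.rank + B.rank = b :=
  (finrank_quotient_comap_range_add_finrank_range_add_finrank_range _ _
    (Matrix.range_mulVecLin_le_ker_mulVecLin hBA)).trans (finrank_fin_fun F2)

theorem finrank_matCohomology_add_rank_add_rank (hBA : B * A = 0) :
    finrank F2 (MatCohomology A B) + A.rank + B.rank = b := by
  have hATBT : Aᵀ * Bᵀ = 0 := by rw [← Matrix.transpose_mul, hBA, Matrix.transpose_zero]
  have h := (finrank_quotient_comap_range_add_finrank_range_add_finrank_range _ _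
    (Matrix.range_mulVecLin_le_ker_mulVecLin hATBT)).trans (finrank_fin_fun F2)
  rwa [← Matrix.rank, ← Matrix.rank, Matrix.rank_transpose, Matrix.rank_transpose,
    add_right_comm] at h

theorem finrank_matCohomology_eq_finrank_dual (hBA : B * A = 0) :
    finrank F2 (MatCohomology A B) = finrank F2 (Dual F2 (MatHomology A B)) := by
  have hHom := finrank_matHomology_add_rank_add_rank A B hBA
  have hCohom := finrank_matCohomology_add_rank_add_rank A B hBA
  rw [Subspace.dual_finrank_eq]
  omega

end ChainComplex

/-- Given cycles `z₁, …, z_k` whose homology classes form a basis of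
`H₁ = ker(B.mulVecLin)/range(A.mulVecLin)`, there exist cocycles `x₁, …, x_k` whose cohomology
classes form a basis of `H¹ = ker(Aᵀ.mulVecLin)/range(Bᵀ.mulVecLin)` with `x_i ⬝ᵥ z_j = δ_{ij}`;
moreover the cohomology classes of such dual vectors are unique. -/
theorem dual_basis_exists_unique
    (a b c k : ℕ) (A : Matrix (Fin b) (Fin a) F2) (B : Matrix (Fin c) (Fin b) F2)
    (hBA : B * A = 0)
    (z : Fin k → Fin b → F2) (hz : ∀ j, B.mulVec (z j) = 0)
    (hbz : ∃ bz : Module.Basis (Fin k) F2 (MatHomology A B),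
      ∀ j, bz j = MatHomology.mk A B (z j) (hz j)) :
    ∃ (x : Fin k → Fin b → F2) (hx : ∀ i, Aᵀ.mulVec (x i) = 0),
      (∃ bx : Module.Basis (Fin k) F2 (MatCohomology A B),
        ∀ i, bx i = MatCohomology.mk A B (x i) (hx i)) ∧
      (∀ i j, x i ⬝ᵥ z j = if i = j then 1 else 0) ∧
      (∀ (x' : Fin k → Fin b → F2) (hx' : ∀ i, Aᵀ.mulVec (x' i) = 0),
        (∀ i j, x' i ⬝ᵥ z j = if i = j then 1 else 0) →
        ∀ i, MatCohomology.mk A B (x' i) (hx' i) = MatCohomology.mk A B (x i) (hx i)) := by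
  obtain ⟨bz, hbz⟩ := hbz
  let e := (cohomologyPairing A B).linearEquivOfInjective (cohomologyPairing_injective A B)
    (finrank_matCohomology_eq_finrank_dual A B hBA)
  let bx := bz.dualBasis.map e.symm
  choose x hx hxbx using fun i => MatCohomology.exists_mk_eq A B (bx i)
  have hdual : ∀ i j, x i ⬝ᵥ z j = if i = j then 1 else 0 := fun i j => by
    rw [← cohomologyPairing_mk_mk A B _ (hx i) _ (hz j), hxbx, ← hbz]
    change e (bx i) (bz j) = _
    rw [Basis.map_apply, e.apply_symm_apply, Basis.dualBasis_apply_self]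
    simp only [eq_comm]
  refine ⟨x, hx, ⟨bx, fun i => (hxbx i).symm⟩, hdual, fun x' hx' hdual' i => ?_⟩
  refine cohomologyPairing_injective A B (bz.ext fun j => ?_)
  rw [hbz, cohomologyPairing_mk_mk, cohomologyPairing_mk_mk, hdual' i j, hdual i j]
end

section
/- Let P_X be an m_X×n matrix and P_Z an m_Z×n matrix over F₂ = ZMod 2 with P_X * P_Zᵀ = 0. Set H = fromBlocks P_X 0 0 P_Z and Ω = fromBlocks 0 I_n I_n 0. Then the quotient space ker((H * Ω).mulVecLin) / range(Hᵀ.mulVecLin) is linearly isomorphic to the direct product (ker(P_X.mulVecLin) / range(P_Zᵀ.mulVecLin)) × (ker(P_Z.mulVecLin) / range(P_Xᵀ.mulVecLin)). That is, the space of logical operators of a CSS code splits as the direct sum of its degree-1 homology (Z-logical operators) and its degree-1 cohomology (X-logical operators). -/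
open Matrix

/-- The CSS-form parity check matrix `H = fromBlocks P_X 0 0 P_Z`. -/
def cssParityCheck {n mX mZ : ℕ} (PX : Matrix (Fin mX) (Fin n) F2)
    (PZ : Matrix (Fin mZ) (Fin n) F2) :
    Matrix (Fin mX ⊕ Fin mZ) (Fin n ⊕ Fin n) F2 :=
  Matrix.fromBlocks PX 0 0 PZ

/-- The symplectic form matrix `Ω = fromBlocks 0 I_n I_n 0`. -/
def symplecticForm (n : ℕ) : Matrix (Fin n ⊕ Fin n) (Fin n ⊕ Fin n) F2 :=
  Matrix.fromBlocks 0 1 1 0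

/-!
Write a Pauli operator in symplectic coordinates as `v = (x, z)`. It commutes with every
stabiliser iff `P_Z x = 0` and `P_X z = 0`, and it is a stabiliser iff `x ∈ im P_Xᵀ` and
`z ∈ im P_Zᵀ`. So both the kernel and the image are products along the two halves of the
coordinates, and a subquotient of a product is the product of the subquotients.
-/

namespace Submodule

variable {R M M₁ M₂ : Type*} [Ring R] [AddCommGroup M] [Module R M]
  [AddCommGroup M₁] [Module R M₁] [AddCommGroup M₂] [Module R M₂]

abbrev Subquotient (K B : Submodule R M) : Type _ := K ⧸ B.comap K.subtype

noncomputable def subquotientComapEquiv (f : M →ₗ[R] M₁) (hf : Function.Surjective f)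
    (K B : Submodule R M₁) : (K.comap f).Subquotient (B.comap f) ≃ₗ[R] K.Subquotient B :=
  let g := (B.comap K.subtype).mkQ ∘ₗ f.restrict (p := K.comap f) (q := K) fun _ h => h
  have hg : Function.Surjective g := by
    rintro ⟨⟨y, hy⟩⟩
    obtain ⟨x, rfl⟩ := hf y
    exact ⟨⟨x, hy⟩, rfl⟩
  have hker : (B.comap f).comap (K.comap f).subtype = LinearMap.ker g := by
    ext x
    simp [g]
  (quotEquivOfEq _ _ hker).trans (g.quotKerEquivOfSurjective hg)

noncomputable def subquotientProdEquiv (K₁ B₁ : Submodule R M₁) (K₂ B₂ : Submodule R M₂) :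
    (K₁.prod K₂).Subquotient (B₁.prod B₂) ≃ₗ[R] K₁.Subquotient B₁ × K₂.Subquotient B₂ :=
  let g : K₁.prod K₂ →ₗ[R] K₁.Subquotient B₁ × K₂.Subquotient B₂ :=
    ((B₁.comap K₁.subtype).mkQ ∘ₗ
        (LinearMap.fst R M₁ M₂).restrict (p := K₁.prod K₂) fun _ h => h.1).prod
      ((B₂.comap K₂.subtype).mkQ ∘ₗ
        (LinearMap.snd R M₁ M₂).restrict (p := K₁.prod K₂) fun _ h => h.2)
  have hg : Function.Surjective g := by
    rintro ⟨⟨⟨x₁, h₁⟩⟩, ⟨⟨x₂, h₂⟩⟩⟩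
    exact ⟨⟨(x₁, x₂), h₁, h₂⟩, rfl⟩
  have hker : (B₁.prod B₂).comap (K₁.prod K₂).subtype = LinearMap.ker g := by
    ext x
    simp only [mem_comap, subtype_apply, mem_prod, LinearMap.ker_prod, mem_inf,
      LinearMap.mem_ker, LinearMap.coe_comp, Function.comp_apply, mkQ_apply,
      Quotient.mk_eq_zero, g]
    exact Iff.rfl
  (quotEquivOfEq _ _ hker).trans (g.quotKerEquivOfSurjective hg)

end Submodule

@[simp]
theorem LinearEquiv.sumArrowLequivProdArrow_apply {α β R M : Type*} [Semiring R]
    [AddCommMonoid M] [Module R M] (v : α ⊕ β → M) :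
    sumArrowLequivProdArrow α β R M v = (v ∘ Sum.inl, v ∘ Sum.inr) :=
  rfl

namespace Matrix

variable {R m m' n n' : Type*} [CommRing R] [Fintype n] [Fintype n']

theorem mulVecLin_fromBlocks_zero_zero (A : Matrix m n R) (D : Matrix m' n' R) :
    (fromBlocks A 0 0 D).mulVecLin =
      (LinearEquiv.sumArrowLequivProdArrow m m' R R).symm.toLinearMap ∘ₗ
        A.mulVecLin.prodMap D.mulVecLin ∘ₗ
          (LinearEquiv.sumArrowLequivProdArrow n n' R R).toLinearMap := by
  ext v (i | i) <;> simp [fromBlocks_mulVec]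

theorem range_mulVecLin_fromBlocks_zero_zero (A : Matrix m n R) (D : Matrix m' n' R) :
    LinearMap.range (fromBlocks A 0 0 D).mulVecLin =
      ((LinearMap.range A.mulVecLin).prod (LinearMap.range D.mulVecLin)).comap
        (LinearEquiv.sumArrowLequivProdArrow m m' R R).toLinearMap := by
  rw [mulVecLin_fromBlocks_zero_zero, LinearMap.range_comp, LinearEquiv.range_comp,
    LinearMap.range_prodMap, Submodule.map_equiv_eq_comap_symm, LinearEquiv.symm_symm]

end Matrix

section CSS

variable {n mX mZ : ℕ} (PX : Matrix (Fin mX) (Fin n) F2) (PZ : Matrix (Fin mZ) (Fin n) F2)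

theorem ker_mulVecLin_cssParityCheck_mul_symplecticForm :
    LinearMap.ker (cssParityCheck PX PZ * symplecticForm n).mulVecLin =
      ((LinearMap.ker PZ.mulVecLin).prod (LinearMap.ker PX.mulVecLin)).comap
        (LinearEquiv.sumArrowLequivProdArrow (Fin n) (Fin n) F2 F2).toLinearMap := by
  ext v
  simp [cssParityCheck, symplecticForm, fromBlocks_multiply, fromBlocks_mulVec, funext_iff,
    Sum.forall, and_comm]

theorem range_mulVecLin_transpose_cssParityCheck :
    LinearMap.range (cssParityCheck PX PZ)ᵀ.mulVecLin =
      ((LinearMap.range PXᵀ.mulVecLin).prod (LinearMap.range PZᵀ.mulVecLin)).comap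
        (LinearEquiv.sumArrowLequivProdArrow (Fin n) (Fin n) F2 F2).toLinearMap := by
  rw [cssParityCheck, fromBlocks_transpose, transpose_zero, transpose_zero,
    range_mulVecLin_fromBlocks_zero_zero]

end CSS

theorem logical_operators_split_general
    (n mX mZ : ℕ) (PX : Matrix (Fin mX) (Fin n) F2) (PZ : Matrix (Fin mZ) (Fin n) F2) :
    Nonempty (
      ((LinearMap.ker ((cssParityCheck PX PZ * symplecticForm n).mulVecLin)) ⧸
        (Submodule.comap (LinearMap.ker ((cssParityCheck PX PZ * symplecticForm n).mulVecLin)).subtype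
          (LinearMap.range (cssParityCheck PX PZ)ᵀ.mulVecLin)))
      ≃ₗ[F2]
      (((LinearMap.ker PX.mulVecLin) ⧸
          (Submodule.comap (LinearMap.ker PX.mulVecLin).subtype (LinearMap.range PZᵀ.mulVecLin))) ×
       ((LinearMap.ker PZ.mulVecLin) ⧸
          (Submodule.comap (LinearMap.ker PZ.mulVecLin).subtype (LinearMap.range PXᵀ.mulVecLin))))) := by
  rw [ker_mulVecLin_cssParityCheck_mul_symplecticForm, range_mulVecLin_transpose_cssParityCheck]
  exact ⟨Submodule.subquotientComapEquiv _ (LinearEquiv.surjective _) _ _ ≪≫ₗ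
    Submodule.subquotientProdEquiv _ _ _ _ ≪≫ₗ LinearEquiv.prodComm F2 _ _⟩

/-- For a CSS code (`P_X * P_Zᵀ = 0`) with parity check matrix
`H = fromBlocks P_X 0 0 P_Z` and symplectic form `Ω`, the space of logical operators
`ker((H*Ω).mulVecLin)/range(Hᵀ.mulVecLin)` is linearly isomorphic to the product of its
degree-1 homology `ker(P_X)/im(P_Zᵀ)` (Z-logicals) and degree-1 cohomology
`ker(P_Z)/im(P_Xᵀ)` (X-logicals). -/
theorem logical_operators_split
    (n mX mZ : ℕ) (PX : Matrix (Fin mX) (Fin n) F2) (PZ : Matrix (Fin mZ) (Fin n) F2)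
    (h : PX * PZᵀ = 0) :
    Nonempty (
      ((LinearMap.ker ((cssParityCheck PX PZ * symplecticForm n).mulVecLin)) ⧸
        (Submodule.comap (LinearMap.ker ((cssParityCheck PX PZ * symplecticForm n).mulVecLin)).subtype
          (LinearMap.range (cssParityCheck PX PZ)ᵀ.mulVecLin)))
      ≃ₗ[F2]
      (((LinearMap.ker PX.mulVecLin) ⧸
          (Submodule.comap (LinearMap.ker PX.mulVecLin).subtype (LinearMap.range PZᵀ.mulVecLin))) ×
       ((LinearMap.ker PZ.mulVecLin) ⧸
          (Submodule.comap (LinearMap.ker PZ.mulVecLin).subtype (LinearMap.range PXᵀ.mulVecLin))))) :=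
  logical_operators_split_general n mX mZ PX PZ
end
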